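/- arXiv:2010.00334 — 7 statements merged into one kernel-verified Lean document; each statement's English description precedes it below -/
import Mathlib

section
/- Let σ be a finite set of uncertain events with timestamps tmin(e) ≤ tmax(e), let E = {(e, e') ∈ σ × σ : tmax(e) < tmin(e')}, and let R ⊆ E be any edge-minimal subrelation of E whose reflexive-transitive closure (reachability relation) coincides with that of E. Then for all e, e' ∈ σ: (e, e') ∈ R if and only if tmax(e) < tmin(e') and there exists no event e'' ∈ σ with tmax(e) < tmin(e'') ≤ tmax(e'') < tmin(e'). In particular the edge set computed by the behavior-graph construction algorithm, which consists exactly of the pairs satisfying this condition, equals the transitive reduction of (σ, E). -/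
/-!
Since `tmin ≤ tmax`, precedence is a strict order on a finite set, and the pairs in the
conclusion are exactly its covering pairs. Every subrelation with the same reachability
contains each covering pair `(a, b)`: a path from `a` to `b` can only start with that very
edge, since any other first step would land strictly between `a` and `b`. Conversely the
covering pairs alone already generate the order, so an edge-minimal `R` has no other edges.
-/

namespace Relation

variable {α : Type*} {r s : α → α → Prop}

def Covering (r : α → α → Prop) (a b : α) : Prop :=
  r a b ∧ ¬∃ c, r a c ∧ r c b

theorem Covering.rel {a b : α} (h : Covering r a b) : r a b := h.1

theorem eq_or_rel_of_reflTransGen [IsTrans α r] {a b : α} (h : ReflTransGen r a b) :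
    a = b ∨ r a b := by
  rw [reflTransGen_iff_eq_or_transGen, transGen_eq_self] at h
  exact h.imp Eq.symm id

theorem transGen_covering_of_rel [Finite α] [IsStrictOrder α r] (a : α) :
    ∀ b, r a b → TransGen (Covering r) a b := by
  induction a using (Finite.wellFounded_of_trans_of_irrefl (Function.swap r)).induction with
  | _ a ih =>
  intro b hab
  by_cases hcov : Covering r a b
  · exact .single hcov
  -- `a` is covered by any `r`-minimal point strictly between `a` and `b`
  obtain ⟨c, ⟨hac, hcb⟩, hmin⟩ := (Finite.wellFounded_of_trans_of_irrefl r).has_min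
    {c | r a c ∧ r c b} (by simpa [Covering, hab, Set.Nonempty] using hcov)
  have hcov_ac : Covering r a c :=
    ⟨hac, fun ⟨d, had, hdc⟩ => hmin d ⟨had, _root_.trans hdc hcb⟩ hdc⟩
  exact .head hcov_ac (ih c hac b hcb)

theorem reflTransGen_covering [Finite α] [IsStrictOrder α r] :
    ReflTransGen (Covering r) = ReflTransGen r := by
  funext a b
  refine propext ⟨ReflTransGen.mono (fun _ _ => Covering.rel) a b, fun h => ?_⟩
  rcases eq_or_rel_of_reflTransGen h with rfl | hab
  · exact .refl
  · exact (transGen_covering_of_rel a b hab).to_reflTransGen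

theorem Covering.of_reflTransGen_eq [IsStrictOrder α r] (hsr : ∀ a b, s a b → r a b)
    (hclos : ReflTransGen s = ReflTransGen r) {a b : α} (hab : Covering r a b) : s a b := by
  have hs : ReflTransGen s a b := hclos ▸ ReflTransGen.single hab.rel
  rcases hs.cases_head with rfl | ⟨c, hac, hcb⟩
  · exact absurd hab.rel (irrefl a)
  rcases eq_or_rel_of_reflTransGen (hclos ▸ hcb) with rfl | hcb
  · exact hac
  · exact absurd ⟨c, hsr a c hac, hcb⟩ hab.2

theorem mem_iff_covering_of_card_le [Fintype α] [IsStrictOrder α r] {R : Finset (α × α)}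
    (hR : ∀ p ∈ R, r p.1 p.2)
    (hclos : ReflTransGen (fun x y => (x, y) ∈ R) = ReflTransGen r)
    (hmin : ∀ R' : Finset (α × α), (∀ p ∈ R', r p.1 p.2) →
      ReflTransGen (fun x y => (x, y) ∈ R') = ReflTransGen r → R.card ≤ R'.card)
    (a b : α) : (a, b) ∈ R ↔ Covering r a b := by
  classical
  let C : Finset (α × α) := {p | Covering r p.1 p.2}
  have hC : ∀ p, p ∈ C ↔ Covering r p.1 p.2 := by simp [C]
  have hCR : C ⊆ R := fun p hp =>
    ((hC p).1 hp).of_reflTransGen_eq (s := fun x y => (x, y) ∈ R) (fun x y => hR (x, y)) hclos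
  have hCclos : ReflTransGen (fun x y => (x, y) ∈ C) = ReflTransGen r := by
    simpa only [hC] using reflTransGen_covering
  rw [← Finset.eq_of_subset_of_card_le hCR (hmin C (fun p hp => ((hC p).1 hp).rel) hCclos), hC]

end Relation

/-- Any edge-minimal subrelation `R` of the precedence relation `E` whose
reflexive-transitive closure coincides with that of `E` consists exactly of the
pairs `(e, e')` with `tmax e < tmin e'` such that no event `e''` satisfies
`tmax e < tmin e'' ≤ tmax e'' < tmin e'`; i.e. it equals the edge set computed
by the behavior-graph construction algorithm, the transitive reduction. -/
theorem behavior_graph_edges_eq_transitive_reduction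
    {V : Type*} [Fintype V]
    (tmin tmax : V → ℝ) (h : ∀ e : V, tmin e ≤ tmax e)
    (E R : Finset (V × V))
    (hE : ∀ p : V × V, p ∈ E ↔ tmax p.1 < tmin p.2)
    (hRE : R ⊆ E)
    (hclos : ∀ a b : V,
      Relation.ReflTransGen (fun x y => (x, y) ∈ R) a b ↔
      Relation.ReflTransGen (fun x y => (x, y) ∈ E) a b)
    (hmin : ∀ R' : Finset (V × V), R' ⊆ E →
      (∀ a b : V,
        Relation.ReflTransGen (fun x y => (x, y) ∈ R') a b ↔
        Relation.ReflTransGen (fun x y => (x, y) ∈ E) a b) →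
      R.card ≤ R'.card) :
    ∀ e e' : V, (e, e') ∈ R ↔
      (tmax e < tmin e' ∧
        ¬ ∃ e'' : V, tmax e < tmin e'' ∧ tmin e'' ≤ tmax e'' ∧ tmax e'' < tmin e') := by
  let r : V → V → Prop := fun x y => (x, y) ∈ E
  have hr : ∀ x y, r x y ↔ tmax x < tmin y := fun x y => hE (x, y)
  have : IsStrictOrder V r :=
    { irrefl := fun a ha => ((hr a a).1 ha).not_ge (h a)
      trans := fun a b c hab hbc =>
        (hr a c).2 (((hr a b).1 hab).trans_le ((h b).trans ((hr b c).1 hbc).le)) }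
  intro e e'
  rw [Relation.mem_iff_covering_of_card_le (r := r) (fun p hp => hRE hp)
    (funext₂ fun a b => propext (hclos a b))
    (fun R' hR' hR'clos => hmin R' (fun p hp => hR' p hp) fun a b => by rw [hR'clos])]
  simp only [Relation.Covering, hr, h, true_and]
end

section
/- Let σ be a finite set of uncertain events with timestamps tmin(e) ≤ tmax(e), and let R be the edge set of the behavior graph of σ, i.e., R = {(e, e') : tmax(e) < tmin(e') and there is no e'' ∈ σ with tmax(e) < tmin(e'') and tmax(e'') < tmin(e')}. Then for all e, e' ∈ σ, e' is reachable from e by a nonempty R-path (i.e., (e, e') lies in the transitive closure of R) if and only if tmax(e) < tmin(e'). That is, the transitive reduction preserves exactly the reachability of the precedence relation ≺. -/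
/-- In the behavior graph, `e'` is reachable from `e` by a nonempty path if and
only if `tmax e < tmin e'`: the transitive reduction preserves exactly the
reachability of the precedence relation. -/
theorem behavior_graph_reachability
    {V : Type*} [Fintype V]
    (tmin tmax : V → ℝ) (h : ∀ e : V, tmin e ≤ tmax e) :
    ∀ e e' : V,
      Relation.TransGen
        (fun a b => tmax a < tmin b ∧ ¬ ∃ c : V, tmax a < tmin c ∧ tmax c < tmin b)
        e e'
      ↔ tmax e < tmin e' := by
  classical
  intro e e'
  constructor
  · intro htg
    induction htg with
    | single h1 => exact h1.1
    | tail _ h1 ih => exact ((ih.trans_le (h _)).trans h1.1)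
  · have key : ∀ n : ℕ, ∀ e e' : V,
        (Finset.univ.filter (fun c => tmax e < tmin c ∧ tmax c < tmin e')).card ≤ n →
        tmax e < tmin e' →
        Relation.TransGen
          (fun a b => tmax a < tmin b ∧ ¬ ∃ c : V, tmax a < tmin c ∧ tmax c < tmin b)
          e e' := by
      intro n
      induction n with
      | zero =>
        intro e e' hcard hlt
        refine Relation.TransGen.single ⟨hlt, ?_⟩
        rintro ⟨c, hc1, hc2⟩
        have hmem : c ∈ Finset.univ.filter
            (fun c => tmax e < tmin c ∧ tmax c < tmin e') := by
          simp [hc1, hc2]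
        have := Finset.card_pos.mpr ⟨c, hmem⟩
        omega
      | succ n ih =>
        intro e e' hcard hlt
        by_cases hex : ∃ c : V, tmax e < tmin c ∧ tmax c < tmin e'
        · obtain ⟨c, hc1, hc2⟩ := hex
          have hmem : c ∈ Finset.univ.filter
              (fun c => tmax e < tmin c ∧ tmax c < tmin e') := by
            simp [hc1, hc2]
          have hsub1 : Finset.univ.filter (fun d => tmax e < tmin d ∧ tmax d < tmin c) ⊂
              Finset.univ.filter (fun d => tmax e < tmin d ∧ tmax d < tmin e') := by
            refine Finset.ssubset_iff_of_subset ?_ |>.mpr ⟨c, hmem, ?_⟩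
            · intro d hd
              simp only [Finset.mem_filter, Finset.mem_univ, true_and] at hd ⊢
              exact ⟨hd.1, (hd.2.trans_le (h c)).trans hc2⟩
            · simp only [Finset.mem_filter, Finset.mem_univ, true_and, not_and]
              intro _
              exact not_lt.mpr (h c)
          have hsub2 : Finset.univ.filter (fun d => tmax c < tmin d ∧ tmax d < tmin e') ⊂
              Finset.univ.filter (fun d => tmax e < tmin d ∧ tmax d < tmin e') := by
            refine Finset.ssubset_iff_of_subset ?_ |>.mpr ⟨c, hmem, ?_⟩
            · intro d hd
              simp only [Finset.mem_filter, Finset.mem_univ, true_and] at hd ⊢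
              exact ⟨(hc1.trans_le (h c)).trans hd.1, hd.2⟩
            · simp only [Finset.mem_filter, Finset.mem_univ, true_and, not_and]
              intro hcc
              exact (not_lt.mpr (h c) hcc).elim
          have h1 := ih e c (by have := Finset.card_lt_card hsub1; omega) hc1
          have h2 := ih c e' (by have := Finset.card_lt_card hsub2; omega) hc2
          exact h1.trans h2
        · exact Relation.TransGen.single ⟨hlt, hex⟩
    intro hlt
    exact key _ e e' le_rfl hlt
end

section
/- Let σ be a finite set of uncertain events with timestamps tmin(e) ≤ tmax(e), and let R be the edge set of the behavior graph of σ. Then for two distinct events e, e' ∈ σ, neither e' is reachable from e nor e is reachable from e' by a nonempty R-path if and only if the timestamp intervals of e and e' overlap, i.e., tmin(e') ≤ tmax(e) and tmin(e) ≤ tmax(e'). In other words, pairs of events that are mutually unreachable in the behavior graph are exactly the pairs whose order is unknown. -/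
section Aux

variable {V : Type*} [Fintype V] (tmin tmax : V → ℝ)

private lemma bg_trans_lt (h : ∀ e : V, tmin e ≤ tmax e) {a b : V}
    (hab : Relation.TransGen
      (fun a b => tmax a < tmin b ∧ ¬ ∃ c : V, tmax a < tmin c ∧ tmax c < tmin b) a b) :
    tmax a < tmin b := by
  induction hab with
  | single hr => exact hr.1
  | tail _ hr ih => exact lt_of_lt_of_le ih (le_trans (h _) (le_of_lt hr.1))

private lemma bg_lt_trans (h : ∀ e : V, tmin e ≤ tmax e) :
    ∀ n : ℕ, ∀ a b : V,
      (Finset.univ.filter (fun c => tmax a < tmin c ∧ tmax c < tmin b)).card ≤ n →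
      tmax a < tmin b →
      Relation.TransGen
        (fun a b => tmax a < tmin b ∧ ¬ ∃ c : V, tmax a < tmin c ∧ tmax c < tmin b) a b := by
  intro n
  induction n with
  | zero =>
    intro a b hcard hab
    refine Relation.TransGen.single ⟨hab, ?_⟩
    rintro ⟨c, hc1, hc2⟩
    have : c ∈ Finset.univ.filter (fun c => tmax a < tmin c ∧ tmax c < tmin b) := by
      simp [hc1, hc2]
    have := Finset.card_pos.mpr ⟨c, this⟩
    omega
  | succ n ih =>
    intro a b hcard hab
    by_cases hex : ∃ c : V, tmax a < tmin c ∧ tmax c < tmin b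
    · obtain ⟨c, hc1, hc2⟩ := hex
      have hsub1 : (Finset.univ.filter (fun d => tmax a < tmin d ∧ tmax d < tmin c)) ⊂
          (Finset.univ.filter (fun d => tmax a < tmin d ∧ tmax d < tmin b)) := by
        constructor
        · intro d hd
          simp only [Finset.mem_filter, Finset.mem_univ, true_and] at hd ⊢
          exact ⟨hd.1, lt_of_lt_of_le hd.2 (le_trans (h c) (le_of_lt hc2))⟩
        · intro hsub
          have hc : c ∈ Finset.univ.filter (fun d => tmax a < tmin d ∧ tmax d < tmin b) := by
            simp [hc1, hc2]
          have := hsub hc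
          simp only [Finset.mem_filter, Finset.mem_univ, true_and] at this
          exact absurd this.2 (not_lt.mpr (h c))
      have hsub2 : (Finset.univ.filter (fun d => tmax c < tmin d ∧ tmax d < tmin b)) ⊂
          (Finset.univ.filter (fun d => tmax a < tmin d ∧ tmax d < tmin b)) := by
        constructor
        · intro d hd
          simp only [Finset.mem_filter, Finset.mem_univ, true_and] at hd ⊢
          exact ⟨lt_of_lt_of_le hc1 (le_trans (h c) (le_of_lt hd.1)), hd.2⟩
        · intro hsub
          have hc : c ∈ Finset.univ.filter (fun d => tmax a < tmin d ∧ tmax d < tmin b) := by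
            simp [hc1, hc2]
          have := hsub hc
          simp only [Finset.mem_filter, Finset.mem_univ, true_and] at this
          exact absurd this.1 (not_lt.mpr (h c))
      have h1 := Finset.card_lt_card hsub1
      have h2 := Finset.card_lt_card hsub2
      exact (ih a c (by omega) hc1).trans (ih c b (by omega) hc2)
    · exact Relation.TransGen.single ⟨hab, hex⟩

end Aux

/-- Two distinct events are mutually unreachable in the behavior graph (by
nonempty paths) if and only if their timestamp intervals overlap. -/
theorem behavior_graph_mutually_unreachable_iff_overlap
    {V : Type*} [Fintype V]
    (tmin tmax : V → ℝ) (h : ∀ e : V, tmin e ≤ tmax e) :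
    ∀ e e' : V, e ≠ e' →
      ((¬ Relation.TransGen
          (fun a b => tmax a < tmin b ∧ ¬ ∃ c : V, tmax a < tmin c ∧ tmax c < tmin b)
          e e' ∧
        ¬ Relation.TransGen
          (fun a b => tmax a < tmin b ∧ ¬ ∃ c : V, tmax a < tmin c ∧ tmax c < tmin b)
          e' e)
      ↔ (tmin e' ≤ tmax e ∧ tmin e ≤ tmax e')) := by
  intro e e' _
  constructor
  · rintro ⟨h1, h2⟩
    constructor
    · by_contra hlt
      exact h1 (bg_lt_trans tmin tmax h _ e e' le_rfl (not_le.mp hlt))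
    · by_contra hlt
      exact h2 (bg_lt_trans tmin tmax h _ e' e le_rfl (not_le.mp hlt))
  · rintro ⟨ho1, ho2⟩
    exact ⟨fun ht => absurd (bg_trans_lt tmin tmax h ht) (not_lt.mpr ho1),
           fun ht => absurd (bg_trans_lt tmin tmax h ht) (not_lt.mpr ho2)⟩
end

section
/- Let σ be a finite set of n uncertain events with timestamps tmin(e) ≤ tmax(e), and let R be the edge set of the behavior graph of σ. Let s = ⟨e_1, …, e_n⟩ be a permutation of the events of σ (a sequence listing each element of σ exactly once). Then s is an order-realization of σ (i.e., for all 1 ≤ i < j ≤ n it is not the case that e_j ≺ e_i) if and only if s is a topological sorting of the behavior graph (i.e., for all 1 ≤ i < j ≤ n, e_i is not reachable from e_j by a nonempty R-path). Hence the set of topological sortings of β(σ) equals the set of order-realizations of σ. -/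
open Classical in
private lemma prec_of_transGen {V : Type*} (tmin tmax : V → ℝ)
    (h : ∀ e : V, tmin e ≤ tmax e) {a b : V}
    (hab : Relation.TransGen
      (fun a b => tmax a < tmin b ∧ ¬ ∃ c : V, tmax a < tmin c ∧ tmax c < tmin b) a b) :
    tmax a < tmin b := by
  induction hab with
  | single h1 => exact h1.1
  | tail _ h2 ih => exact lt_of_le_of_lt (le_of_lt (lt_of_lt_of_le ih (h _))) h2.1

open Classical in
private lemma transGen_of_prec {V : Type*} [Fintype V] (tmin tmax : V → ℝ)
    (h : ∀ e : V, tmin e ≤ tmax e) :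
    ∀ a b : V, tmax a < tmin b →
    Relation.TransGen
      (fun a b => tmax a < tmin b ∧ ¬ ∃ c : V, tmax a < tmin c ∧ tmax c < tmin b) a b := by
  have key : ∀ n : ℕ, ∀ a b : V,
      ({x : V | tmax a < tmin x ∧ tmax x < tmin b}).ncard = n →
      tmax a < tmin b →
      Relation.TransGen
        (fun a b => tmax a < tmin b ∧ ¬ ∃ c : V, tmax a < tmin c ∧ tmax c < tmin b) a b := by
    intro n
    induction n using Nat.strong_induction_on with
    | _ n ih =>
      intro a b hcard hab
      by_cases hc : ∃ c : V, tmax a < tmin c ∧ tmax c < tmin b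
      · obtain ⟨c, hac, hcb⟩ := hc
        have hfin : ∀ (S : Set V), S.Finite := fun S => S.toFinite
        have hsub1 : {x : V | tmax a < tmin x ∧ tmax x < tmin c} ⊂
            {x : V | tmax a < tmin x ∧ tmax x < tmin b} := by
          constructor
          · intro x ⟨h1, h2⟩
            exact ⟨h1, lt_of_le_of_lt (le_of_lt (lt_of_lt_of_le h2 (h c))) hcb⟩
          · intro hsub
            have := hsub ⟨hac, hcb⟩
            exact absurd this.2 (not_lt.mpr (h c))
        have hsub2 : {x : V | tmax c < tmin x ∧ tmax x < tmin b} ⊂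
            {x : V | tmax a < tmin x ∧ tmax x < tmin b} := by
          constructor
          · intro x ⟨h1, h2⟩
            exact ⟨lt_of_le_of_lt (le_of_lt (lt_of_lt_of_le hac (h c))) h1, h2⟩
          · intro hsub
            have := hsub ⟨hac, hcb⟩
            exact absurd this.1 (not_lt.mpr (h c))
        have hlt1 : ({x : V | tmax a < tmin x ∧ tmax x < tmin c}).ncard < n := by
          rw [← hcard]
          exact Set.ncard_lt_ncard hsub1 (hfin _)
        have hlt2 : ({x : V | tmax c < tmin x ∧ tmax x < tmin b}).ncard < n := by
          rw [← hcard]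
          exact Set.ncard_lt_ncard hsub2 (hfin _)
        exact (ih _ hlt1 a c rfl hac).trans (ih _ hlt2 c b rfl hcb)
      · exact Relation.TransGen.single ⟨hab, hc⟩
  intro a b hab
  exact key _ a b rfl hab

/-- A permutation `s` of the events of an uncertain trace is an
order-realization (no later element precedes an earlier one under `≺`) if and
only if it is a topological sorting of the behavior graph (no earlier element
is reachable from a later one by a nonempty path of behavior-graph edges). -/
theorem order_realizations_eq_topological_sortings
    {V : Type*} [Fintype V]
    (tmin tmax : V → ℝ) (h : ∀ e : V, tmin e ≤ tmax e)
    (s : List V) (hnodup : s.Nodup) (hall : ∀ v : V, v ∈ s) :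
    (∀ i j : Fin s.length, i < j → ¬ tmax (s.get j) < tmin (s.get i)) ↔
    (∀ i j : Fin s.length, i < j →
      ¬ Relation.TransGen
        (fun a b => tmax a < tmin b ∧ ¬ ∃ c : V, tmax a < tmin c ∧ tmax c < tmin b)
        (s.get j) (s.get i)) := by
  constructor
  · intro H i j hij htg
    exact H i j hij (prec_of_transGen tmin tmax h htg)
  · intro H i j hij hprec
    exact H i j hij (transGen_of_prec tmin tmax h _ _ hprec)
end

section
/- Let V be a finite set and let ≺ be an irreflexive transitive relation on V (a finite strict partial order). Then there is exactly one edge-minimal subrelation R ⊆ ≺ whose transitive closure equals ≺, namely the covering relation of ≺: R = {(v, w) : v ≺ w and there is no u with v ≺ u and u ≺ w}. That is, the transitive reduction of the directed acyclic graph (V, ≺) exists, is unique, and equals the set of covering pairs of ≺. -/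
/-- For a finite strict partial order `≺` there is exactly one edge-minimal
subrelation whose transitive closure equals `≺`, namely the covering relation:
the transitive reduction of a finite DAG exists, is unique, and equals the set
of covering pairs. -/
theorem transitive_reduction_exists_unique_eq_covering
    {V : Type*} [Fintype V]
    (prec : V → V → Prop)
    (hirr : ∀ v : V, ¬ prec v v)
    (htrans : ∀ u v w : V, prec u v → prec v w → prec u w) :
    ∃ R : Finset (V × V),
      ((∀ p ∈ R, prec p.1 p.2) ∧
        (∀ a b : V, Relation.TransGen (fun x y => (x, y) ∈ R) a b ↔ prec a b) ∧
        (∀ R' : Finset (V × V), (∀ p ∈ R', prec p.1 p.2) →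
          (∀ a b : V, Relation.TransGen (fun x y => (x, y) ∈ R') a b ↔ prec a b) →
          R.card ≤ R'.card)) ∧
      (∀ p : V × V, p ∈ R ↔ (prec p.1 p.2 ∧ ¬ ∃ u : V, prec p.1 u ∧ prec u p.2)) ∧
      (∀ R' : Finset (V × V),
        ((∀ p ∈ R', prec p.1 p.2) ∧
          (∀ a b : V, Relation.TransGen (fun x y => (x, y) ∈ R') a b ↔ prec a b) ∧
          (∀ R'' : Finset (V × V), (∀ p ∈ R'', prec p.1 p.2) →
            (∀ a b : V, Relation.TransGen (fun x y => (x, y) ∈ R'') a b ↔ prec a b) →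
            R'.card ≤ R''.card)) →
        R' = R) := by
  classical
  set R : Finset (V × V) :=
    Finset.univ.filter (fun p => prec p.1 p.2 ∧ ¬ ∃ u : V, prec p.1 u ∧ prec u p.2) with hR
  have hmemR : ∀ p : V × V, p ∈ R ↔ (prec p.1 p.2 ∧ ¬ ∃ u : V, prec p.1 u ∧ prec u p.2) := by
    intro p; simp [hR]
  -- Key: covering pairs generate prec
  have key : ∀ n : ℕ, ∀ a b : V,
      (Finset.univ.filter (fun u => prec a u ∧ prec u b)).card = n → prec a b →
      Relation.TransGen (fun x y => (x, y) ∈ R) a b := by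
    intro n
    induction n using Nat.strong_induction_on with
    | _ n ih =>
      intro a b hcard hab
      by_cases h : ∃ u, prec a u ∧ prec u b
      · obtain ⟨u, hau, hub⟩ := h
        have huin : u ∈ Finset.univ.filter (fun x => prec a x ∧ prec x b) := by
          simp [hau, hub]
        have h1 : (Finset.univ.filter (fun x => prec a x ∧ prec x u)).card < n := by
          rw [← hcard]
          apply Finset.card_lt_card
          constructor
          · intro x hx
            simp only [Finset.mem_filter] at hx ⊢
            exact ⟨Finset.mem_univ x, hx.2.1, htrans _ _ _ hx.2.2 hub⟩
          · intro hsub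
            have := hsub huin
            simp only [Finset.mem_filter] at this
            exact hirr u this.2.2
        have h2 : (Finset.univ.filter (fun x => prec u x ∧ prec x b)).card < n := by
          rw [← hcard]
          apply Finset.card_lt_card
          constructor
          · intro x hx
            simp only [Finset.mem_filter] at hx ⊢
            exact ⟨Finset.mem_univ x, htrans _ _ _ hau hx.2.1, hx.2.2⟩
          · intro hsub
            have := hsub huin
            simp only [Finset.mem_filter] at this
            exact hirr u this.2.1
        exact (ih _ h1 a u rfl hau).trans (ih _ h2 u b rfl hub)
      · exact Relation.TransGen.single ((hmemR (a, b)).2 ⟨hab, h⟩)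
  have hRprec : ∀ p ∈ R, prec p.1 p.2 := fun p hp => ((hmemR p).1 hp).1
  have hRclos : ∀ a b : V, Relation.TransGen (fun x y => (x, y) ∈ R) a b ↔ prec a b := by
    intro a b
    constructor
    · intro h
      induction h with
      | single h => exact hRprec _ h
      | tail _ h ih => exact htrans _ _ _ ih (hRprec _ h)
    · intro hab
      exact key _ a b rfl hab
  -- any valid R' contains R
  have hsub : ∀ R' : Finset (V × V), (∀ p ∈ R', prec p.1 p.2) →
      (∀ a b : V, Relation.TransGen (fun x y => (x, y) ∈ R') a b ↔ prec a b) →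
      R ⊆ R' := by
    intro R' hp' hc' p hpR
    obtain ⟨hpab, hncov⟩ := (hmemR p).1 hpR
    have htg : Relation.TransGen (fun x y => (x, y) ∈ R') p.1 p.2 := (hc' _ _).2 hpab
    rcases (Relation.transGen_iff _ _ _).1 htg with h | ⟨c, hac, hcb⟩
    · exact h
    · exfalso
      exact hncov ⟨c, (hc' _ _).1 hac, hp' _ hcb⟩
  have hmin : ∀ R' : Finset (V × V), (∀ p ∈ R', prec p.1 p.2) →
      (∀ a b : V, Relation.TransGen (fun x y => (x, y) ∈ R') a b ↔ prec a b) →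
      R.card ≤ R'.card := fun R' h1 h2 => Finset.card_le_card (hsub R' h1 h2)
  refine ⟨R, ⟨hRprec, hRclos, hmin⟩, hmemR, ?_⟩
  intro R' ⟨h1, h2, h3⟩
  have hsub' : R ⊆ R' := hsub R' h1 h2
  have hle : R'.card ≤ R.card := h3 R hRprec hRclos
  exact (Finset.eq_of_subset_of_card_le hsub' hle).symm
end

section
/- Let σ be a finite set of 2k uncertain events (k ≥ 1) partitioned into two disjoint sets A and B, each of size k, such that: (i) any two distinct events within A have overlapping timestamp intervals (neither precedes the other under ≺), (ii) any two distinct events within B have overlapping timestamp intervals, and (iii) every event of A precedes every event of B, i.e., tmax(a) < tmin(b) for all a ∈ A, b ∈ B. Then the edge set of the behavior graph of σ is exactly A × B; in particular, the behavior graph is isomorphic to the complete directed bipartite graph K_{k,k} and has exactly k² edges, which is quadratic in the number 2k of events. -/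
/-- If a trace of `2k` events splits into two sets `A`, `B` of size `k`, with
pairwise overlapping intervals inside each set and every event of `A` preceding
every event of `B`, then the behavior-graph edge set is exactly `A × B`: the
behavior graph is the complete directed bipartite graph `K_{k,k}` with `k²`
edges. -/
theorem behavior_graph_complete_bipartite
    {V : Type*} [Fintype V] [DecidableEq V]
    (tmin tmax : V → ℝ) (h : ∀ e : V, tmin e ≤ tmax e)
    (k : ℕ) (hk : 1 ≤ k) (A B : Finset V)
    (hU : A ∪ B = Finset.univ) (hdisj : Disjoint A B)
    (hA : A.card = k) (hB : B.card = k)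
    (hAo : ∀ a ∈ A, ∀ a' ∈ A, a ≠ a' → ¬ tmax a < tmin a')
    (hBo : ∀ b ∈ B, ∀ b' ∈ B, b ≠ b' → ¬ tmax b < tmin b')
    (hAB : ∀ a ∈ A, ∀ b ∈ B, tmax a < tmin b) :
    (∀ e e' : V,
      (tmax e < tmin e' ∧ ¬ ∃ c : V, tmax e < tmin c ∧ tmax c < tmin e') ↔
      (e ∈ A ∧ e' ∈ B)) ∧
    {p : V × V |
      tmax p.1 < tmin p.2 ∧ ¬ ∃ c : V, tmax p.1 < tmin c ∧ tmax c < tmin p.2}.ncard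
      = k ^ 2 := by
  have hmem : ∀ e : V, e ∈ A ∨ e ∈ B := by
    intro e
    have : e ∈ A ∪ B := by rw [hU]; exact Finset.mem_univ e
    exact Finset.mem_union.mp this
  have key : ∀ e e' : V,
      (tmax e < tmin e' ∧ ¬ ∃ c : V, tmax e < tmin c ∧ tmax c < tmin e') ↔
      (e ∈ A ∧ e' ∈ B) := by
    intro e e'
    constructor
    · rintro ⟨hlt, _⟩
      rcases hmem e with he | he <;> rcases hmem e' with he' | he'
      · exfalso
        rcases eq_or_ne e e' with rfl | hne
        · exact absurd (h e) (not_le.mpr hlt)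
        · exact hAo e he e' he' hne hlt
      · exact ⟨he, he'⟩
      · exfalso
        have h1 := hAB e' he' e he
        have := (hlt.trans_le (h e')).trans h1
        exact absurd (h e) (not_le.mpr this)
      · exfalso
        rcases eq_or_ne e e' with rfl | hne
        · exact absurd (h e) (not_le.mpr hlt)
        · exact hBo e he e' he' hne hlt
    · rintro ⟨he, he'⟩
      refine ⟨hAB e he e' he', ?_⟩
      rintro ⟨c, hc1, hc2⟩
      rcases hmem c with hc | hc
      · rcases eq_or_ne e c with rfl | hne
        · exact absurd (h e) (not_le.mpr hc1)
        · exact hAo e he c hc hne hc1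
      · rcases eq_or_ne c e' with rfl | hne
        · exact absurd (h c) (not_le.mpr hc2)
        · exact hBo c hc e' he' hne hc2
  refine ⟨key, ?_⟩
  have hset : {p : V × V |
      tmax p.1 < tmin p.2 ∧ ¬ ∃ c : V, tmax p.1 < tmin c ∧ tmax c < tmin p.2}
      = ↑(A ×ˢ B) := by
    ext ⟨e, e'⟩
    simp only [Set.mem_setOf_eq, Finset.coe_product, Set.mem_prod,
      Finset.mem_coe]
    exact key e e'
  rw [hset, Set.ncard_coe_finset, Finset.card_product, hA, hB, sq]
end

section
/- For every natural number k ≥ 1 there exists an uncertain trace σ with exactly 2k events whose behavior graph has exactly k² edges. Concretely, one may take the k events with timestamp intervals [i, k + i − 1] for i = 1, …, k together with the k events with timestamp intervals [2k + j − 1, 3k + j − 1] for j = 1, …, k: for this trace, the behavior graph edge set consists of all k² pairs (e_i, f_j) from the first group to the second group. -/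
/-- For every `k ≥ 1` there is an uncertain trace with exactly `2k` events whose
behavior graph has exactly `k²` edges: take `k` events with intervals
`[i, k+i-1]` (`i = 1, …, k`, here `0`-indexed as `[i+1, k+i]`) and `k` events
with intervals `[2k+j-1, 3k+j-1]` (`j = 1, …, k`, here `0`-indexed as
`[2k+j, 3k+j]`); all `k²` pairs from the first to the second group are
behavior-graph edges. -/
theorem behavior_graph_quadratic_lower_bound (k : ℕ) (hk : 1 ≤ k) :
    ∃ tmin tmax : Fin k ⊕ Fin k → ℝ,
      tmin = Sum.elim (fun (i : Fin k) => ((i : ℕ) : ℝ) + 1)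
                      (fun (j : Fin k) => 2 * (k : ℝ) + ((j : ℕ) : ℝ)) ∧
      tmax = Sum.elim (fun (i : Fin k) => (k : ℝ) + ((i : ℕ) : ℝ))
                      (fun (j : Fin k) => 3 * (k : ℝ) + ((j : ℕ) : ℝ)) ∧
      (∀ e, tmin e ≤ tmax e) ∧
      Fintype.card (Fin k ⊕ Fin k) = 2 * k ∧
      (∀ e e' : Fin k ⊕ Fin k,
        (tmax e < tmin e' ∧
          ¬ ∃ c : Fin k ⊕ Fin k, tmax e < tmin c ∧ tmax c < tmin e') ↔
        (∃ i j : Fin k, e = Sum.inl i ∧ e' = Sum.inr j)) ∧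
      {p : (Fin k ⊕ Fin k) × (Fin k ⊕ Fin k) |
        tmax p.1 < tmin p.2 ∧
          ¬ ∃ c : Fin k ⊕ Fin k, tmax p.1 < tmin c ∧ tmax c < tmin p.2}.ncard
        = k ^ 2 := by
  set tmin : Fin k ⊕ Fin k → ℝ :=
    Sum.elim (fun (i : Fin k) => ((i : ℕ) : ℝ) + 1)
             (fun (j : Fin k) => 2 * (k : ℝ) + ((j : ℕ) : ℝ)) with htmin
  set tmax : Fin k ⊕ Fin k → ℝ :=
    Sum.elim (fun (i : Fin k) => (k : ℝ) + ((i : ℕ) : ℝ))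
             (fun (j : Fin k) => 3 * (k : ℝ) + ((j : ℕ) : ℝ)) with htmax
  have hkR : (1 : ℝ) ≤ (k : ℝ) := by exact_mod_cast hk
  have hb : ∀ i : Fin k, ((i : ℕ) : ℝ) + 1 ≤ (k : ℝ) := by
    intro i
    have := i.isLt
    have : ((i : ℕ) : ℝ) + 1 ≤ (k : ℝ) := by exact_mod_cast this
    exact this
  have key : ∀ e e' : Fin k ⊕ Fin k,
      (tmax e < tmin e' ∧
        ¬ ∃ c : Fin k ⊕ Fin k, tmax e < tmin c ∧ tmax c < tmin e') ↔
      (∃ i j : Fin k, e = Sum.inl i ∧ e' = Sum.inr j) := by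
    intro e e'
    constructor
    · rintro ⟨h1, _⟩
      rcases e with i | j <;> rcases e' with i' | j'
      · exact absurd h1 (by simp [htmin, htmax]; have := hb i'; linarith [hb i'])
      · exact ⟨i, j', rfl, rfl⟩
      · exact absurd h1 (by simp [htmin, htmax]; have := hb i'; linarith [hb i'])
      · exact absurd h1 (by simp [htmin, htmax]; linarith [hb j'])
    · rintro ⟨i, j, rfl, rfl⟩
      constructor
      · simp only [htmin, htmax, Sum.elim_inl, Sum.elim_inr]
        have := hb i
        have : (0 : ℝ) ≤ ((j : ℕ) : ℝ) := by positivity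
        linarith [hb i]
      · rintro ⟨c, hc1, hc2⟩
        rcases c with i' | j'
        · simp only [htmin, htmax, Sum.elim_inl, Sum.elim_inr] at hc1 hc2
          have := hb i'
          have h0 : (0 : ℝ) ≤ ((i : ℕ) : ℝ) := by positivity
          linarith
        · simp only [htmin, htmax, Sum.elim_inl, Sum.elim_inr] at hc1 hc2
          have := hb j
          have h0 : (0 : ℝ) ≤ ((j' : ℕ) : ℝ) := by positivity
          linarith
  refine ⟨tmin, tmax, rfl, rfl, ?_, ?_, key, ?_⟩
  · rintro (i | j) <;> simp only [htmin, htmax, Sum.elim_inl, Sum.elim_inr]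
    · linarith [hb i]
    · linarith
  · simp [two_mul]
  · have hset : {p : (Fin k ⊕ Fin k) × (Fin k ⊕ Fin k) |
        tmax p.1 < tmin p.2 ∧
          ¬ ∃ c : Fin k ⊕ Fin k, tmax p.1 < tmin c ∧ tmax c < tmin p.2}
        = Set.range (fun ij : Fin k × Fin k => ((Sum.inl ij.1 : Fin k ⊕ Fin k), (Sum.inr ij.2 : Fin k ⊕ Fin k))) := by
      ext p
      rw [Set.mem_setOf_eq, key p.1 p.2]
      constructor
      · rintro ⟨i, j, h1, h2⟩
        exact ⟨(i, j), by simp [Prod.ext_iff, h1.symm, h2.symm]⟩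
      · rintro ⟨⟨i, j⟩, hij⟩
        exact ⟨i, j, by simp [← hij], by simp [← hij]⟩
    have hinj : Function.Injective
        (fun ij : Fin k × Fin k => ((Sum.inl ij.1 : Fin k ⊕ Fin k), (Sum.inr ij.2 : Fin k ⊕ Fin k))) := by
      intro a b hab
      simpa [Prod.ext_iff] using hab
    rw [hset, ← Set.image_univ, Set.ncard_image_of_injective _ hinj, Set.ncard_univ]
    simp [sq]
end
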